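/- arXiv:2010.10223 — 16 statements merged into one kernel-verified Lean document; each statement's English description precedes it below -/
import Mathlib

section
/- Let 𝕋 = (T, μ, η) be a monad on a category C, F : C ⥤ C an endofunctor, and λ : T∘F ⟹ F∘T a distributive law. For any object Y of C and any morphism f : Y ⟶ F(T Y), the triple (T Y, μ_Y, f^♯), where f^♯ := F(μ_Y) ∘ λ_{T Y} ∘ T f : T Y ⟶ F(T Y), is a λ-bialgebra; that is, f^♯ ∘ μ_Y = F(μ_Y) ∘ λ_{T Y} ∘ T(f^♯) : T(T Y) ⟶ F(T Y). -/
open CategoryTheory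

/-- For a monad `T`, an endofunctor `F`, and a distributive law `lam : T∘F ⟹ F∘T`,
for any `f : Y ⟶ F(T Y)` the triple `(T Y, μ_Y, f^♯)` with
`f^♯ = F(μ_Y) ∘ λ_{T Y} ∘ T f` is a `λ`-bialgebra, i.e.
`f^♯ ∘ μ_Y = F(μ_Y) ∘ λ_{T Y} ∘ T(f^♯)`. -/
theorem stmt0 {C : Type*} [Category C] (T : Monad C) (F : C ⥤ C)
    (lam : F ⋙ (T : C ⥤ C) ⟶ (T : C ⥤ C) ⋙ F)
    (hlη : ∀ Z : C, T.η.app (F.obj Z) ≫ lam.app Z = F.map (T.η.app Z))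
    (hlμ : ∀ Z : C, T.μ.app (F.obj Z) ≫ lam.app Z =
      T.map (lam.app Z) ≫ lam.app (T.obj Z) ≫ F.map (T.μ.app Z))
    (Y : C) (f : Y ⟶ F.obj (T.obj Y)) :
    T.μ.app Y ≫ (T.map f ≫ lam.app (T.obj Y) ≫ F.map (T.μ.app Y)) =
      T.map (T.map f ≫ lam.app (T.obj Y) ≫ F.map (T.μ.app Y)) ≫
        lam.app (T.obj Y) ≫ F.map (T.μ.app Y) := by
  have h1 : T.μ.app Y ≫ T.map f = T.map (T.map f) ≫ T.μ.app (F.obj (T.obj Y)) :=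
    (T.μ.naturality f).symm
  have h2 := hlμ (T.obj Y)
  have h3 := lam.naturality (T.μ.app Y)
  simp only [Functor.comp_map, Functor.comp_obj] at h3
  have h4 : T.μ.app (T.obj Y) ≫ T.μ.app Y = T.map (T.μ.app Y) ≫ T.μ.app Y := by
    rw [T.assoc]
  calc T.μ.app Y ≫ (T.map f ≫ lam.app (T.obj Y) ≫ F.map (T.μ.app Y))
      = T.map (T.map f) ≫ T.μ.app (F.obj (T.obj Y)) ≫ lam.app (T.obj Y) ≫
          F.map (T.μ.app Y) := by rw [reassoc_of% h1]
    _ = T.map (T.map f) ≫ T.map (lam.app (T.obj Y)) ≫ lam.app (T.obj (T.obj Y)) ≫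
          F.map (T.μ.app (T.obj Y)) ≫ F.map (T.μ.app Y) := by rw [reassoc_of% h2]
    _ = T.map (T.map f) ≫ T.map (lam.app (T.obj Y)) ≫
          (lam.app (T.obj (T.obj Y)) ≫ F.map (T.map (T.μ.app Y))) ≫
          F.map (T.μ.app Y) := by
        rw [Category.assoc, ← F.map_comp, ← F.map_comp, h4]
    _ = T.map (T.map f ≫ lam.app (T.obj Y) ≫ F.map (T.μ.app Y)) ≫
          lam.app (T.obj Y) ≫ F.map (T.μ.app Y) := by
        rw [← h3]; simp only [Functor.map_comp, Category.assoc]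
end

section
/- Let (X, h, k) be a λ-bialgebra and (Y, i, d) a generator for the 𝕋-algebra (X, h). Then i^♯ := h ∘ T i : T Y ⟶ X is a λ-bialgebra homomorphism from (T Y, μ_Y, (F d ∘ k ∘ i)^♯) to (X, h, k); that is, i^♯ ∘ μ_Y = h ∘ T(i^♯) and k ∘ i^♯ = F(i^♯) ∘ (F d ∘ k ∘ i)^♯, where (F d ∘ k ∘ i)^♯ := F(μ_Y) ∘ λ_{T Y} ∘ T(F d ∘ k ∘ i). -/
open CategoryTheory

/-- If `(X, h, k)` is a `λ`-bialgebra and `(Y, i, d)` is a generator for the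
`T`-algebra `(X, h)`, then `i^♯ := h ∘ T i` is a `λ`-bialgebra homomorphism
from `(T Y, μ_Y, (F d ∘ k ∘ i)^♯)` to `(X, h, k)`. -/
theorem stmt1 {C : Type*} [Category C] (T : Monad C) (F : C ⥤ C)
    (lam : F ⋙ (T : C ⥤ C) ⟶ (T : C ⥤ C) ⋙ F)
    (hlη : ∀ Z : C, T.η.app (F.obj Z) ≫ lam.app Z = F.map (T.η.app Z))
    (hlμ : ∀ Z : C, T.μ.app (F.obj Z) ≫ lam.app Z =
      T.map (lam.app Z) ≫ lam.app (T.obj Z) ≫ F.map (T.μ.app Z))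
    (X : C) (h : T.obj X ⟶ X)
    (halg1 : T.μ.app X ≫ h = T.map h ≫ h) (halg2 : T.η.app X ≫ h = 𝟙 X)
    (k : X ⟶ F.obj X)
    (hbi : h ≫ k = T.map k ≫ lam.app X ≫ F.map h)
    (Y : C) (i : Y ⟶ X) (d : X ⟶ T.obj Y)
    (hgen : d ≫ T.map i ≫ h = 𝟙 X) :
    -- i^♯ is a T-algebra homomorphism from (T Y, μ_Y) to (X, h)
    T.μ.app Y ≫ (T.map i ≫ h) = T.map (T.map i ≫ h) ≫ h ∧
    -- i^♯ is an F-coalgebra homomorphism from (T Y, (F d ∘ k ∘ i)^♯) to (X, k)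
    (T.map i ≫ h) ≫ k =
      (T.map (i ≫ k ≫ F.map d) ≫ lam.app (T.obj Y) ≫ F.map (T.μ.app Y)) ≫
        F.map (T.map i ≫ h) := by
  constructor
  · have hnat : T.μ.app Y ≫ T.map i = T.map (T.map i) ≫ T.μ.app X := by
      simpa using (T.μ.naturality i).symm
    rw [← Category.assoc, hnat, Category.assoc, halg1, ← Category.assoc,
      ← T.toFunctor.map_comp]
  · have hkey : T.map d ≫ T.μ.app Y ≫ T.map i ≫ h = h := by
      have hnat : T.μ.app Y ≫ T.map i = T.map (T.map i) ≫ T.μ.app X := by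
        simpa using (T.μ.naturality i).symm
      slice_lhs 2 3 => rw [hnat]
      slice_lhs 3 4 => rw [halg1]
      rw [← Category.assoc, ← Category.assoc, ← T.toFunctor.map_comp,
        ← T.toFunctor.map_comp]
      rw [show (d ≫ T.map i) ≫ h = 𝟙 X by simpa using hgen]
      simp
    have hlnat : T.map (F.map d) ≫ lam.app (T.obj Y) = lam.app X ≫ F.map (T.map d) := by
      simpa using lam.naturality d
    calc (T.map i ≫ h) ≫ k = T.map i ≫ T.map k ≫ lam.app X ≫ F.map h := by
          rw [Category.assoc, hbi]
      _ = T.map i ≫ T.map k ≫ lam.app X ≫ F.map (T.map d ≫ T.μ.app Y ≫ T.map i ≫ h) := by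
          rw [hkey]
      _ = _ := by
          simp only [F.map_comp, T.toFunctor.map_comp, Category.assoc]
          rw [← Category.assoc (lam.app X), ← hlnat]
          simp
end

section
/- Let (X, h, k) be a λ-bialgebra, let (Y_α, i_α, d_α) and (Y_β, i_β, d_β) be generators for the 𝕋-algebra (X, h), and let f : Y_α ⟶ Y_β be a morphism of generators, i.e. i_β ∘ f = i_α and T f ∘ d_α = d_β. Then T f : T Y_α ⟶ T Y_β satisfies (h ∘ T i_β) ∘ T f = h ∘ T i_α, commutes with the monad multiplications (T f ∘ μ_{Y_α} = μ_{Y_β} ∘ T(T f)), and is an F-coalgebra homomorphism between the lifted coalgebra structures: (F d_β ∘ k ∘ i_β)^♯ ∘ T f = F(T f) ∘ (F d_α ∘ k ∘ i_α)^♯. -/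
open CategoryTheory

/-- A morphism `f` of generators for the underlying algebra of a `λ`-bialgebra
induces `T f`, which commutes with `i^♯`'s, with the monad multiplications, and
is an `F`-coalgebra homomorphism between the lifted coalgebra structures. -/
theorem stmt2 {C : Type*} [Category C] (T : Monad C) (F : C ⥤ C)
    (lam : F ⋙ (T : C ⥤ C) ⟶ (T : C ⥤ C) ⋙ F)
    (hlη : ∀ Z : C, T.η.app (F.obj Z) ≫ lam.app Z = F.map (T.η.app Z))
    (hlμ : ∀ Z : C, T.μ.app (F.obj Z) ≫ lam.app Z =
      T.map (lam.app Z) ≫ lam.app (T.obj Z) ≫ F.map (T.μ.app Z))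
    (X : C) (h : T.obj X ⟶ X)
    (halg1 : T.μ.app X ≫ h = T.map h ≫ h) (halg2 : T.η.app X ≫ h = 𝟙 X)
    (k : X ⟶ F.obj X)
    (hbi : h ≫ k = T.map k ≫ lam.app X ≫ F.map h)
    (Yα Yβ : C) (iα : Yα ⟶ X) (dα : X ⟶ T.obj Yα) (iβ : Yβ ⟶ X) (dβ : X ⟶ T.obj Yβ)
    (hgenα : dα ≫ T.map iα ≫ h = 𝟙 X)
    (hgenβ : dβ ≫ T.map iβ ≫ h = 𝟙 X)
    (f : Yα ⟶ Yβ) (hf1 : f ≫ iβ = iα) (hf2 : dα ≫ T.map f = dβ) :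
    -- (h ∘ T i_β) ∘ T f = h ∘ T i_α
    T.map f ≫ T.map iβ ≫ h = T.map iα ≫ h ∧
    -- T f commutes with the monad multiplications
    T.μ.app Yα ≫ T.map f = T.map (T.map f) ≫ T.μ.app Yβ ∧
    -- T f is an F-coalgebra homomorphism between the lifted coalgebra structures
    T.map f ≫ (T.map (iβ ≫ k ≫ F.map dβ) ≫ lam.app (T.obj Yβ) ≫ F.map (T.μ.app Yβ)) =
      (T.map (iα ≫ k ≫ F.map dα) ≫ lam.app (T.obj Yα) ≫ F.map (T.μ.app Yα)) ≫
        F.map (T.map f) := by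
  refine ⟨?_, (T.μ.naturality f).symm, ?_⟩
  · rw [← Functor.map_comp_assoc, hf1]
  · have hnat : T.map (F.map (T.map f)) ≫ lam.app (T.obj Yβ) =
        lam.app (T.obj Yα) ≫ F.map (T.map (T.map f)) := lam.naturality (T.map f)
    rw [← Functor.map_comp_assoc, ← Category.assoc f, hf1, ← hf2]
    simp only [Functor.map_comp, Category.assoc]
    rw [reassoc_of% hnat]
    simp only [Category.assoc, ← F.map_comp]
    rw [← T.μ.naturality f]
    simp
end

section
/- Let (Y, i, d) be a basis for a 𝕋-algebra (X, h). Then d is a 𝕋-algebra homomorphism from (X, h) to the free algebra (T Y, μ_Y), i.e. d ∘ h = μ_Y ∘ T d, and moreover d ∘ i = η_Y. -/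
open CategoryTheory

/-- If `(Y, i, d)` is a basis for a `T`-algebra `(X, h)`, then `d` is a
`T`-algebra homomorphism from `(X, h)` to `(T Y, μ_Y)`, and `d ∘ i = η_Y`. -/
theorem stmt4 {C : Type*} [Category C] (T : Monad C)
    (X : C) (h : T.obj X ⟶ X)
    (halg1 : T.μ.app X ≫ h = T.map h ≫ h) (halg2 : T.η.app X ≫ h = 𝟙 X)
    (Y : C) (i : Y ⟶ X) (d : X ⟶ T.obj Y)
    (hgen : d ≫ T.map i ≫ h = 𝟙 X)
    (hbasis : T.map i ≫ h ≫ d = 𝟙 (T.obj Y)) :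
    h ≫ d = T.map d ≫ T.μ.app Y ∧ i ≫ d = T.η.app Y := by
  have key : T.map d ≫ T.μ.app Y ≫ T.map i ≫ h = h := by
    calc T.map d ≫ T.μ.app Y ≫ T.map i ≫ h
        = T.map d ≫ T.map (T.map i) ≫ T.μ.app X ≫ h := by
          rw [← Category.assoc (T.μ.app Y), ← T.μ.naturality i]
          simp [Monad.μ]
      _ = T.map (d ≫ T.map i ≫ h) ≫ h := by
          rw [halg1]; simp [T.map_comp]
      _ = h := by rw [hgen]; simp
  constructor
  · calc h ≫ d = (T.map d ≫ T.μ.app Y ≫ T.map i ≫ h) ≫ d := by rw [key]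
      _ = T.map d ≫ T.μ.app Y ≫ (T.map i ≫ h ≫ d) := by simp
      _ = T.map d ≫ T.μ.app Y := by rw [hbasis]; simp
  · calc i ≫ d = (T.η.app Y ≫ T.map i ≫ h) ≫ d := by
          rw [← Category.assoc (T.η.app Y), ← T.η.naturality i]
          simp [halg2]
      _ = T.η.app Y ≫ (T.map i ≫ h ≫ d) := by simp
      _ = T.η.app Y := by rw [hbasis]; simp
end

section
/- Let (Y, i, d) be a basis for a 𝕋-algebra (X, h). Then T i ∘ d : X ⟶ T X is a 𝕋-algebra homomorphism from (X, h) to the free algebra (T X, μ_X) (i.e. (T i ∘ d) ∘ h = μ_X ∘ T(T i ∘ d)), it has the 𝕋-algebra homomorphism h : (T X, μ_X) ⟶ (X, h) as a left inverse (h ∘ T i ∘ d = id_X), and consequently T i ∘ d is a monomorphism. -/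
open CategoryTheory

/-- If `(Y, i, d)` is a basis for a `T`-algebra `(X, h)`, then `T i ∘ d` is a
`T`-algebra homomorphism from `(X, h)` to `(T X, μ_X)` with the `T`-algebra
homomorphism `h` as a left inverse; consequently `T i ∘ d` is a monomorphism. -/
theorem stmt6 {C : Type*} [Category C] (T : Monad C)
    (X : C) (h : T.obj X ⟶ X)
    (halg1 : T.μ.app X ≫ h = T.map h ≫ h) (halg2 : T.η.app X ≫ h = 𝟙 X)
    (Y : C) (i : Y ⟶ X) (d : X ⟶ T.obj Y)
    (hgen : d ≫ T.map i ≫ h = 𝟙 X)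
    (hbasis : T.map i ≫ h ≫ d = 𝟙 (T.obj Y)) :
    -- (T i ∘ d) is a T-algebra homomorphism (X, h) ⟶ (T X, μ_X)
    h ≫ (d ≫ T.map i) = T.map (d ≫ T.map i) ≫ T.μ.app X ∧
    -- h is a T-algebra homomorphism (T X, μ_X) ⟶ (X, h)
    T.μ.app X ≫ h = T.map h ≫ h ∧
    -- h is a left inverse of T i ∘ d
    (d ≫ T.map i) ≫ h = 𝟙 X ∧
    -- T i ∘ d is a monomorphism
    Mono (d ≫ T.map i) := by
  have hd : h ≫ d = T.map d ≫ T.μ.app Y := by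
    calc h ≫ d = T.map (d ≫ T.map i ≫ h) ≫ h ≫ d := by rw [hgen, T.map_id, Category.id_comp]
    _ = T.map d ≫ T.map (T.map i) ≫ (T.map h ≫ h) ≫ d := by
        simp [T.map_comp]
    _ = T.map d ≫ T.map (T.map i) ≫ (T.μ.app X ≫ h) ≫ d := by rw [halg1]
    _ = T.map d ≫ (T.map (T.map i) ≫ T.μ.app X) ≫ h ≫ d := by simp
    _ = T.map d ≫ (T.μ.app Y ≫ T.map i) ≫ h ≫ d := by
        have := T.μ.naturality i
        simp only [Functor.comp_map] at this
        rw [this]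
    _ = T.map d ≫ T.μ.app Y ≫ (T.map i ≫ h ≫ d) := by simp
    _ = T.map d ≫ T.μ.app Y := by rw [hbasis]; simp
  have hhom : h ≫ (d ≫ T.map i) = T.map (d ≫ T.map i) ≫ T.μ.app X := by
    rw [← Category.assoc, hd, T.map_comp]
    have := T.μ.naturality i
    simp only [Functor.comp_map] at this
    simp [← this]
  have hleft : (d ≫ T.map i) ≫ h = 𝟙 X := by simpa using hgen
  refine ⟨hhom, halg1, hleft, ?_⟩
  exact mono_of_mono_fac hleft
end

section
/- Let (Y, i, d) be a basis for a 𝕋-algebra (X, h_X), let (Z, h_Z) be another 𝕋-algebra, and let f : Y ⟶ Z be any morphism. Then f^♯ := h_Z ∘ T f ∘ d : X ⟶ Z is a 𝕋-algebra homomorphism from (X, h_X) to (Z, h_Z) (i.e. f^♯ ∘ h_X = h_Z ∘ T(f^♯)) satisfying f^♯ ∘ i = f. -/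
open CategoryTheory

/-- If `(Y, i, d)` is a basis for a `T`-algebra `(X, h_X)` and `(Z, h_Z)` is
another `T`-algebra, then for every morphism `f : Y ⟶ Z` the morphism
`f^♯ := h_Z ∘ T f ∘ d` is a `T`-algebra homomorphism `(X, h_X) ⟶ (Z, h_Z)`
satisfying `f^♯ ∘ i = f`. -/
theorem stmt7 {C : Type*} [Category C] (T : Monad C)
    (X : C) (hX : T.obj X ⟶ X)
    (halgX1 : T.μ.app X ≫ hX = T.map hX ≫ hX) (halgX2 : T.η.app X ≫ hX = 𝟙 X)
    (Z : C) (hZ : T.obj Z ⟶ Z)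
    (halgZ1 : T.μ.app Z ≫ hZ = T.map hZ ≫ hZ) (halgZ2 : T.η.app Z ≫ hZ = 𝟙 Z)
    (Y : C) (i : Y ⟶ X) (d : X ⟶ T.obj Y)
    (hgen : d ≫ T.map i ≫ hX = 𝟙 X)
    (hbasis : T.map i ≫ hX ≫ d = 𝟙 (T.obj Y))
    (f : Y ⟶ Z) :
    hX ≫ (d ≫ T.map f ≫ hZ) = T.map (d ≫ T.map f ≫ hZ) ≫ hZ ∧
    i ≫ (d ≫ T.map f ≫ hZ) = f := by
  have lemA : hX ≫ d = T.map d ≫ T.μ.app Y := by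
    calc hX ≫ d = T.map (𝟙 X) ≫ hX ≫ d := by simp
      _ = T.map (d ≫ T.map i ≫ hX) ≫ hX ≫ d := by rw [hgen]
      _ = T.map d ≫ T.map (T.map i) ≫ T.map hX ≫ hX ≫ d := by
            simp [T.map_comp, Category.assoc]
      _ = T.map d ≫ T.map (T.map i) ≫ T.μ.app X ≫ hX ≫ d := by
            rw [reassoc_of% halgX1]
      _ = T.map d ≫ T.μ.app Y ≫ T.map i ≫ hX ≫ d := by
            rw [reassoc_of% (T.μ.naturality i)]
      _ = T.map d ≫ T.μ.app Y := by rw [hbasis]; simp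
  have lemB : i ≫ d = T.η.app Y := by
    calc i ≫ d = (i ≫ T.η.app X ≫ hX) ≫ d := by rw [halgX2]; simp
      _ = T.η.app Y ≫ T.map i ≫ hX ≫ d := by
            have h := T.η.naturality i
            simp only [Functor.id_map] at h
            rw [← reassoc_of% h]; simp
      _ = T.η.app Y := by rw [hbasis]; simp
  constructor
  · calc hX ≫ d ≫ T.map f ≫ hZ = (hX ≫ d) ≫ T.map f ≫ hZ := by simp
      _ = T.map d ≫ T.μ.app Y ≫ T.map f ≫ hZ := by rw [lemA]; simp
      _ = T.map d ≫ T.map (T.map f) ≫ T.μ.app Z ≫ hZ := by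
            rw [reassoc_of% (T.μ.naturality f)]
      _ = T.map d ≫ T.map (T.map f) ≫ T.map hZ ≫ hZ := by
            rw [halgZ1]
      _ = T.map (d ≫ T.map f ≫ hZ) ≫ hZ := by simp [T.map_comp, Category.assoc]
  · calc i ≫ d ≫ T.map f ≫ hZ = (i ≫ d) ≫ T.map f ≫ hZ := by simp
      _ = T.η.app Y ≫ T.map f ≫ hZ := by rw [lemB]
      _ = f ≫ T.η.app Z ≫ hZ := by
            have h := T.η.naturality f
            simp only [Functor.id_map] at h
            rw [← reassoc_of% h]
      _ = f := by rw [halgZ2]; simp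
end

section
/- Let (X, h, k) be a λ-bialgebra and (Y, i, d) a basis for the 𝕋-algebra (X, h). Then d : X ⟶ T Y is a λ-bialgebra homomorphism from (X, h, k) to (T Y, μ_Y, (F d ∘ k ∘ i)^♯); that is, d ∘ h = μ_Y ∘ T d and (F d ∘ k ∘ i)^♯ ∘ d = F d ∘ k, where (F d ∘ k ∘ i)^♯ := F(μ_Y) ∘ λ_{T Y} ∘ T(F d ∘ k ∘ i). -/
open CategoryTheory

/-- If `(X, h, k)` is a `λ`-bialgebra and `(Y, i, d)` is a basis for the
`T`-algebra `(X, h)`, then `d` is a `λ`-bialgebra homomorphism from `(X, h, k)`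
to `(T Y, μ_Y, (F d ∘ k ∘ i)^♯)`. -/
theorem stmt8 {C : Type*} [Category C] (T : Monad C) (F : C ⥤ C)
    (lam : F ⋙ (T : C ⥤ C) ⟶ (T : C ⥤ C) ⋙ F)
    (hlη : ∀ Z : C, T.η.app (F.obj Z) ≫ lam.app Z = F.map (T.η.app Z))
    (hlμ : ∀ Z : C, T.μ.app (F.obj Z) ≫ lam.app Z =
      T.map (lam.app Z) ≫ lam.app (T.obj Z) ≫ F.map (T.μ.app Z))
    (X : C) (h : T.obj X ⟶ X)
    (halg1 : T.μ.app X ≫ h = T.map h ≫ h) (halg2 : T.η.app X ≫ h = 𝟙 X)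
    (k : X ⟶ F.obj X)
    (hbi : h ≫ k = T.map k ≫ lam.app X ≫ F.map h)
    (Y : C) (i : Y ⟶ X) (d : X ⟶ T.obj Y)
    (hgen : d ≫ T.map i ≫ h = 𝟙 X)
    (hbasis : T.map i ≫ h ≫ d = 𝟙 (T.obj Y)) :
    -- d is a T-algebra homomorphism
    h ≫ d = T.map d ≫ T.μ.app Y ∧
    -- d is an F-coalgebra homomorphism from (X, k) to (T Y, (F d ∘ k ∘ i)^♯)
    d ≫ (T.map (i ≫ k ≫ F.map d) ≫ lam.app (T.obj Y) ≫ F.map (T.μ.app Y)) =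
      k ≫ F.map d := by
  have part1 : h ≫ d = T.map d ≫ T.μ.app Y := by
    calc h ≫ d = T.map (d ≫ T.map i ≫ h) ≫ h ≫ d := by
          rw [hgen]; simp
      _ = T.map d ≫ T.map (T.map i) ≫ T.map h ≫ h ≫ d := by simp
      _ = T.map d ≫ T.map (T.map i) ≫ T.μ.app X ≫ h ≫ d := by
          rw [← reassoc_of% halg1]
      _ = T.map d ≫ T.μ.app Y ≫ T.map i ≫ h ≫ d := by
          have hμnat : T.map (T.map i) ≫ T.μ.app X = T.μ.app Y ≫ T.map i :=
            T.μ.naturality i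
          rw [reassoc_of% hμnat]
      _ = T.map d ≫ T.μ.app Y := by rw [hbasis, Category.comp_id]
  refine ⟨part1, ?_⟩
  have hnat : T.map (F.map d) ≫ lam.app (T.obj Y) = lam.app X ≫ F.map (T.map d) :=
    lam.naturality d
  calc d ≫ T.map (i ≫ k ≫ F.map d) ≫ lam.app (T.obj Y) ≫ F.map (T.μ.app Y)
      = d ≫ T.map (i ≫ k) ≫ (T.map (F.map d) ≫ lam.app (T.obj Y)) ≫
          F.map (T.μ.app Y) := by simp
    _ = d ≫ T.map (i ≫ k) ≫ lam.app X ≫ F.map (T.map d ≫ T.μ.app Y) := by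
        rw [hnat]; simp
    _ = d ≫ T.map (i ≫ k) ≫ lam.app X ≫ F.map (h ≫ d) := by rw [← part1]
    _ = d ≫ T.map i ≫ (T.map k ≫ lam.app X ≫ F.map h) ≫ F.map d := by simp
    _ = d ≫ T.map i ≫ (h ≫ k) ≫ F.map d := by rw [← hbi]
    _ = (d ≫ T.map i ≫ h) ≫ k ≫ F.map d := by simp
    _ = k ≫ F.map d := by rw [hgen]; simp
end

section
/- Let (X, h, k) be a λ-bialgebra and (Y, i, d) a basis for the 𝕋-algebra (X, h). Then the λ-bialgebras (X, h, k) and (T Y, μ_Y, (F d ∘ k ∘ i)^♯) are isomorphic: d and i^♯ := h ∘ T i are mutually inverse λ-bialgebra homomorphisms between them (each commutes with the algebra structures and with the coalgebra structures, and i^♯ ∘ d = id_X, d ∘ i^♯ = id_{T Y}). -/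
open CategoryTheory

/-- If `(X, h, k)` is a `λ`-bialgebra and `(Y, i, d)` is a basis for the
`T`-algebra `(X, h)`, then the `λ`-bialgebras `(X, h, k)` and
`(T Y, μ_Y, (F d ∘ k ∘ i)^♯)` are isomorphic: `d` and `i^♯ := h ∘ T i` are
mutually inverse `λ`-bialgebra homomorphisms between them. -/
theorem stmt9 {C : Type*} [Category C] (T : Monad C) (F : C ⥤ C)
    (lam : F ⋙ (T : C ⥤ C) ⟶ (T : C ⥤ C) ⋙ F)
    (hlη : ∀ Z : C, T.η.app (F.obj Z) ≫ lam.app Z = F.map (T.η.app Z))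
    (hlμ : ∀ Z : C, T.μ.app (F.obj Z) ≫ lam.app Z =
      T.map (lam.app Z) ≫ lam.app (T.obj Z) ≫ F.map (T.μ.app Z))
    (X : C) (h : T.obj X ⟶ X)
    (halg1 : T.μ.app X ≫ h = T.map h ≫ h) (halg2 : T.η.app X ≫ h = 𝟙 X)
    (k : X ⟶ F.obj X)
    (hbi : h ≫ k = T.map k ≫ lam.app X ≫ F.map h)
    (Y : C) (i : Y ⟶ X) (d : X ⟶ T.obj Y)
    (hgen : d ≫ T.map i ≫ h = 𝟙 X)
    (hbasis : T.map i ≫ h ≫ d = 𝟙 (T.obj Y)) :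
    -- d is a T-algebra homomorphism
    h ≫ d = T.map d ≫ T.μ.app Y ∧
    -- d is an F-coalgebra homomorphism
    d ≫ (T.map (i ≫ k ≫ F.map d) ≫ lam.app (T.obj Y) ≫ F.map (T.μ.app Y)) =
      k ≫ F.map d ∧
    -- i^♯ is a T-algebra homomorphism
    T.μ.app Y ≫ (T.map i ≫ h) = T.map (T.map i ≫ h) ≫ h ∧
    -- i^♯ is an F-coalgebra homomorphism
    (T.map i ≫ h) ≫ k =
      (T.map (i ≫ k ≫ F.map d) ≫ lam.app (T.obj Y) ≫ F.map (T.μ.app Y)) ≫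
        F.map (T.map i ≫ h) ∧
    -- d and i^♯ are mutually inverse
    d ≫ (T.map i ≫ h) = 𝟙 X ∧ (T.map i ≫ h) ≫ d = 𝟙 (T.obj Y) := by
  have hnμ : T.map (T.map i) ≫ T.μ.app X = T.μ.app Y ≫ T.map i := T.μ.naturality i
  have hnlam : T.map (F.map d) ≫ lam.app (T.obj Y) = lam.app X ≫ F.map (T.map d) :=
    lam.naturality d
  have h3 : T.μ.app Y ≫ (T.map i ≫ h) = T.map (T.map i ≫ h) ≫ h := by
    rw [← Category.assoc, ← hnμ, T.map_comp]
    simp [halg1]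
  have h1 : h ≫ d = T.map d ≫ T.μ.app Y := by
    have e1 : T.map d ≫ T.μ.app Y = T.map d ≫ T.μ.app Y ≫ (T.map i ≫ h ≫ d) := by
      rw [hbasis]; simp
    rw [e1]
    slice_rhs 2 4 => rw [show T.μ.app Y ≫ T.map i ≫ h = T.map (T.map i ≫ h) ≫ h from h3]
    slice_rhs 1 2 => rw [← T.map_comp]
    rw [show d ≫ T.map i ≫ h = 𝟙 X from hgen, T.map_id]
    simp
  have hc : T.map (i ≫ k ≫ F.map d) ≫ lam.app (T.obj Y) ≫ F.map (T.μ.app Y) =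
      T.map (i ≫ k) ≫ lam.app X ≫ F.map (T.map d ≫ T.μ.app Y) := by
    rw [show i ≫ k ≫ F.map d = (i ≫ k) ≫ F.map d by simp, T.map_comp]
    slice_lhs 2 3 => rw [hnlam]
    simp [F.map_comp]
  have h2 : d ≫ (T.map (i ≫ k ≫ F.map d) ≫ lam.app (T.obj Y) ≫ F.map (T.μ.app Y)) =
      k ≫ F.map d := by
    rw [hc, ← h1, F.map_comp, T.map_comp]
    slice_lhs 3 5 => rw [← hbi]
    slice_lhs 1 3 => rw [hgen]
    simp
  have h4 : (T.map i ≫ h) ≫ k =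
      (T.map (i ≫ k ≫ F.map d) ≫ lam.app (T.obj Y) ≫ F.map (T.μ.app Y)) ≫
        F.map (T.map i ≫ h) := by
    rw [hc]
    have e2 : T.map d ≫ T.μ.app Y ≫ T.map i ≫ h = h := by
      rw [h3, ← T.map_comp_assoc, show d ≫ T.map i ≫ h = 𝟙 X from hgen, T.map_id]
      simp
    simp only [Category.assoc]
    rw [← F.map_comp,
      show (T.map d ≫ T.μ.app Y) ≫ T.map i ≫ h = h by simpa using e2, T.map_comp]
    slice_rhs 2 4 => rw [← hbi]
  exact ⟨h1, h2, h3, h4, hgen, by rw [Category.assoc]; exact hbasis⟩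
end

section
/- Let (Y_α, i_α, d_α) and (Y_β, i_β, d_β) be bases for a 𝕋-algebra (X, h). Then the free 𝕋-algebras (T Y_α, μ_{Y_α}) and (T Y_β, μ_{Y_β}) are isomorphic: d_β ∘ (h ∘ T i_α) : T Y_α ⟶ T Y_β is a 𝕋-algebra homomorphism with inverse the 𝕋-algebra homomorphism d_α ∘ (h ∘ T i_β) : T Y_β ⟶ T Y_α. -/
open CategoryTheory

section
variable {C : Type*} [Category C] (T : Monad C)

lemma free_hom_fwd (X : C) (h : T.obj X ⟶ X)
    (halg1 : T.μ.app X ≫ h = T.map h ≫ h)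
    (Y : C) (i : Y ⟶ X) :
    T.μ.app Y ≫ T.map i ≫ h = T.map (T.map i ≫ h) ≫ h := by
  have hn := T.μ.naturality i
  simp only [Functor.comp_map] at hn
  rw [← Category.assoc, ← hn, Category.assoc, halg1, Functor.map_comp, Category.assoc]

lemma free_hom_aux (X : C) (h : T.obj X ⟶ X)
    (halg1 : T.μ.app X ≫ h = T.map h ≫ h)
    (Y : C) (i : Y ⟶ X) (d : X ⟶ T.obj Y)
    (hgen : d ≫ T.map i ≫ h = 𝟙 X)
    (hbasis : T.map i ≫ h ≫ d = 𝟙 (T.obj Y)) :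
    h ≫ d = T.map d ≫ T.μ.app Y := by
  have hf := free_hom_fwd T X h halg1 Y i
  have key : T.map d ≫ T.μ.app Y ≫ (T.map i ≫ h) = h := by
    rw [hf, ← Category.assoc, ← Functor.map_comp]
    rw [hgen]; simp
  calc h ≫ d = (T.map d ≫ T.μ.app Y ≫ (T.map i ≫ h)) ≫ d := by rw [key]
    _ = T.map d ≫ T.μ.app Y ≫ (T.map i ≫ h ≫ d) := by simp
    _ = T.map d ≫ T.μ.app Y := by rw [hbasis]; simp

end

/-- If `(Y_α, i_α, d_α)` and `(Y_β, i_β, d_β)` are bases for a `T`-algebra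
`(X, h)`, then the free `T`-algebras `(T Y_α, μ_{Y_α})` and `(T Y_β, μ_{Y_β})`
are isomorphic via the mutually inverse `T`-algebra homomorphisms
`d_β ∘ (h ∘ T i_α)` and `d_α ∘ (h ∘ T i_β)`. -/
theorem stmt12 {C : Type*} [Category C] (T : Monad C)
    (X : C) (h : T.obj X ⟶ X)
    (halg1 : T.μ.app X ≫ h = T.map h ≫ h) (halg2 : T.η.app X ≫ h = 𝟙 X)
    (Yα : C) (iα : Yα ⟶ X) (dα : X ⟶ T.obj Yα)
    (hgenα : dα ≫ T.map iα ≫ h = 𝟙 X)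
    (hbasisα : T.map iα ≫ h ≫ dα = 𝟙 (T.obj Yα))
    (Yβ : C) (iβ : Yβ ⟶ X) (dβ : X ⟶ T.obj Yβ)
    (hgenβ : dβ ≫ T.map iβ ≫ h = 𝟙 X)
    (hbasisβ : T.map iβ ≫ h ≫ dβ = 𝟙 (T.obj Yβ)) :
    -- d_β ∘ (h ∘ T i_α) is a T-algebra homomorphism (T Y_α, μ_{Y_α}) ⟶ (T Y_β, μ_{Y_β})
    T.μ.app Yα ≫ (T.map iα ≫ h ≫ dβ) = T.map (T.map iα ≫ h ≫ dβ) ≫ T.μ.app Yβ ∧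
    -- d_α ∘ (h ∘ T i_β) is a T-algebra homomorphism (T Y_β, μ_{Y_β}) ⟶ (T Y_α, μ_{Y_α})
    T.μ.app Yβ ≫ (T.map iβ ≫ h ≫ dα) = T.map (T.map iβ ≫ h ≫ dα) ≫ T.μ.app Yα ∧
    -- the two homomorphisms are mutually inverse
    (T.map iα ≫ h ≫ dβ) ≫ (T.map iβ ≫ h ≫ dα) = 𝟙 (T.obj Yα) ∧
    (T.map iβ ≫ h ≫ dα) ≫ (T.map iα ≫ h ≫ dβ) = 𝟙 (T.obj Yβ) := by
  have hdα := free_hom_aux T X h halg1 Yα iα dα hgenα hbasisα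
  have hdβ := free_hom_aux T X h halg1 Yβ iβ dβ hgenβ hbasisβ
  have hfα := free_hom_fwd T X h halg1 Yα iα
  have hfβ := free_hom_fwd T X h halg1 Yβ iβ
  refine ⟨?_, ?_, ?_, ?_⟩
  · rw [reassoc_of% hfα]
    conv_lhs => rw [hdβ]
    rw [← Category.assoc, ← Functor.map_comp]
    simp only [Category.assoc]
  · rw [reassoc_of% hfβ]
    conv_lhs => rw [hdα]
    rw [← Category.assoc, ← Functor.map_comp]
    simp only [Category.assoc]
  · calc (T.map iα ≫ h ≫ dβ) ≫ T.map iβ ≫ h ≫ dα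
        = T.map iα ≫ h ≫ (dβ ≫ T.map iβ ≫ h) ≫ dα := by simp
      _ = 𝟙 (T.obj Yα) := by rw [hgenβ]; simpa using hbasisα
  · calc (T.map iβ ≫ h ≫ dα) ≫ T.map iα ≫ h ≫ dβ
        = T.map iβ ≫ h ≫ (dα ≫ T.map iα ≫ h) ≫ dβ := by simp
      _ = 𝟙 (T.obj Yβ) := by rw [hgenα]; simpa using hbasisβ
end

section
/- Let α = (Y_α, i_α, d_α) and β = (Y_β, i_β, d_β) be bases for 𝕋-algebras (X_α, h_α) and (X_β, h_β) respectively, and let p : Y_α ⟶ T Y_β be any morphism. Then the associated morphism p^{αβ} := h_β ∘ T i_β ∘ μ_{Y_β} ∘ T p ∘ d_α : X_α ⟶ X_β is a 𝕋-algebra homomorphism from (X_α, h_α) to (X_β, h_β), i.e. p^{αβ} ∘ h_α = h_β ∘ T(p^{αβ}). -/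
open CategoryTheory

/-- Given bases `α` and `β` for `T`-algebras `(X_α, h_α)` and `(X_β, h_β)` and
any morphism `p : Y_α ⟶ T Y_β`, the associated morphism
`p^{αβ} := h_β ∘ T i_β ∘ μ_{Y_β} ∘ T p ∘ d_α` is a `T`-algebra homomorphism. -/
theorem stmt13 {C : Type*} [Category C] (T : Monad C)
    (Xα : C) (hα : T.obj Xα ⟶ Xα)
    (halgα1 : T.μ.app Xα ≫ hα = T.map hα ≫ hα) (halgα2 : T.η.app Xα ≫ hα = 𝟙 Xα)
    (Xβ : C) (hβ : T.obj Xβ ⟶ Xβ)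
    (halgβ1 : T.μ.app Xβ ≫ hβ = T.map hβ ≫ hβ) (halgβ2 : T.η.app Xβ ≫ hβ = 𝟙 Xβ)
    (Yα : C) (iα : Yα ⟶ Xα) (dα : Xα ⟶ T.obj Yα)
    (hgenα : dα ≫ T.map iα ≫ hα = 𝟙 Xα)
    (hbasisα : T.map iα ≫ hα ≫ dα = 𝟙 (T.obj Yα))
    (Yβ : C) (iβ : Yβ ⟶ Xβ) (dβ : Xβ ⟶ T.obj Yβ)
    (hgenβ : dβ ≫ T.map iβ ≫ hβ = 𝟙 Xβ)
    (hbasisβ : T.map iβ ≫ hβ ≫ dβ = 𝟙 (T.obj Yβ))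
    (p : Yα ⟶ T.obj Yβ) :
    hα ≫ (dα ≫ T.map p ≫ T.μ.app Yβ ≫ T.map iβ ≫ hβ) =
      T.map (dα ≫ T.map p ≫ T.μ.app Yβ ≫ T.map iβ ≫ hβ) ≫ hβ := by
  have munat : ∀ {A B : C} (f : A ⟶ B),
      T.map (T.map f) ≫ T.μ.app B = T.μ.app A ≫ T.map f := fun f => T.μ.naturality f
  have h1 : hα ≫ dα = T.map dα ≫ T.μ.app Yα := by
    calc hα ≫ dα = T.map (dα ≫ T.map iα ≫ hα) ≫ hα ≫ dα := by
          rw [hgenα]; simp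
      _ = T.map dα ≫ T.map (T.map iα) ≫ (T.μ.app Xα ≫ hα) ≫ dα := by
          simp [halgα1]
      _ = T.map dα ≫ T.μ.app Yα ≫ (T.map iα ≫ hα ≫ dα) := by
          slice_lhs 2 3 => rw [munat]
          simp
      _ = T.map dα ≫ T.μ.app Yα := by rw [hbasisα]; simp
  have h2 : T.μ.app Yα ≫ T.map p ≫ T.μ.app Yβ ≫ T.map iβ ≫ hβ =
      T.map (T.map p ≫ T.μ.app Yβ ≫ T.map iβ ≫ hβ) ≫ hβ := by
    calc T.μ.app Yα ≫ T.map p ≫ T.μ.app Yβ ≫ T.map iβ ≫ hβ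
        = T.map (T.map p) ≫ (T.μ.app (T.obj Yβ) ≫ T.μ.app Yβ) ≫ T.map iβ ≫ hβ := by
          slice_lhs 1 2 => rw [← munat]
          simp
      _ = T.map (T.map p) ≫ T.map (T.μ.app Yβ) ≫ T.μ.app Yβ ≫ T.map iβ ≫ hβ := by
          rw [← Monad.assoc]; simp
      _ = T.map (T.map p) ≫ T.map (T.μ.app Yβ) ≫ T.map (T.map iβ) ≫ T.μ.app Xβ ≫ hβ := by
          slice_lhs 3 4 => rw [← munat]
          simp
      _ = T.map (T.map p ≫ T.μ.app Yβ ≫ T.map iβ ≫ hβ) ≫ hβ := by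
          simp [halgβ1]
  calc hα ≫ dα ≫ T.map p ≫ T.μ.app Yβ ≫ T.map iβ ≫ hβ
      = T.map dα ≫ T.μ.app Yα ≫ T.map p ≫ T.μ.app Yβ ≫ T.map iβ ≫ hβ := by
        rw [← Category.assoc, h1]; simp
    _ = T.map (dα ≫ T.map p ≫ T.μ.app Yβ ≫ T.map iβ ≫ hβ) ≫ hβ := by
        rw [h2]; simp
end

section
/- Let α = (Y_α, i_α, d_α) and β = (Y_β, i_β, d_β) be bases for 𝕋-algebras (X_α, h_α) and (X_β, h_β) respectively. Then basis representation and the associated-morphism construction are mutually inverse: for every morphism p : Y_α ⟶ T Y_β one has d_β ∘ p^{αβ} ∘ i_α = p, and for every 𝕋-algebra homomorphism f : (X_α, h_α) ⟶ (X_β, h_β) one has (f_{αβ})^{αβ} = f, where f_{αβ} := d_β ∘ f ∘ i_α and p^{αβ} := h_β ∘ T i_β ∘ μ_{Y_β} ∘ T p ∘ d_α. -/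
open CategoryTheory

/-- Given bases `α` and `β` for `T`-algebras `(X_α, h_α)` and `(X_β, h_β)`,
basis representation `f ↦ f_{αβ} := d_β ∘ f ∘ i_α` and the associated-morphism
construction `p ↦ p^{αβ} := h_β ∘ T i_β ∘ μ_{Y_β} ∘ T p ∘ d_α` are mutually
inverse. -/
theorem stmt14 {C : Type*} [Category C] (T : Monad C)
    (Xα : C) (hα : T.obj Xα ⟶ Xα)
    (halgα1 : T.μ.app Xα ≫ hα = T.map hα ≫ hα) (halgα2 : T.η.app Xα ≫ hα = 𝟙 Xα)
    (Xβ : C) (hβ : T.obj Xβ ⟶ Xβ)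
    (halgβ1 : T.μ.app Xβ ≫ hβ = T.map hβ ≫ hβ) (halgβ2 : T.η.app Xβ ≫ hβ = 𝟙 Xβ)
    (Yα : C) (iα : Yα ⟶ Xα) (dα : Xα ⟶ T.obj Yα)
    (hgenα : dα ≫ T.map iα ≫ hα = 𝟙 Xα)
    (hbasisα : T.map iα ≫ hα ≫ dα = 𝟙 (T.obj Yα))
    (Yβ : C) (iβ : Yβ ⟶ Xβ) (dβ : Xβ ⟶ T.obj Yβ)
    (hgenβ : dβ ≫ T.map iβ ≫ hβ = 𝟙 Xβ)
    (hbasisβ : T.map iβ ≫ hβ ≫ dβ = 𝟙 (T.obj Yβ)) :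
    -- (p^{αβ})_{αβ} = p for every p : Y_α ⟶ T Y_β
    (∀ p : Yα ⟶ T.obj Yβ,
      iα ≫ (dα ≫ T.map p ≫ T.μ.app Yβ ≫ T.map iβ ≫ hβ) ≫ dβ = p) ∧
    -- (f_{αβ})^{αβ} = f for every T-algebra homomorphism f
    (∀ f : Xα ⟶ Xβ, hα ≫ f = T.map f ≫ hβ →
      dα ≫ T.map (iα ≫ f ≫ dβ) ≫ T.μ.app Yβ ≫ T.map iβ ≫ hβ = f) := by

  have h1 : iα ≫ dα = T.η.app Yα := by
    have hn : iα ≫ T.η.app Xα = T.η.app Yα ≫ T.map iα := by simpa using T.η.naturality iα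
    calc iα ≫ dα = iα ≫ (T.η.app Xα ≫ hα) ≫ dα := by rw [halgα2]; simp
      _ = T.η.app Yα ≫ T.map iα ≫ hα ≫ dα := by
            simp only [← Category.assoc, hn]
      _ = T.η.app Yα := by rw [hbasisα]; simp
  constructor
  · intro p
    have : iα ≫ (dα ≫ T.map p ≫ T.μ.app Yβ ≫ T.map iβ ≫ hβ) ≫ dβ
        = (iα ≫ dα) ≫ T.map p ≫ T.μ.app Yβ ≫ (T.map iβ ≫ hβ ≫ dβ) := by
      simp only [Category.assoc]
    rw [this, hbasisβ, Category.comp_id, h1, ← Category.assoc, ← T.η.naturality p]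
    simp
  · intro f hf
    have hμ : T.μ.app Yβ ≫ T.map iβ = T.map (T.map iβ) ≫ T.μ.app Xβ := by
      simpa using (T.μ.naturality iβ).symm
    calc dα ≫ T.map (iα ≫ f ≫ dβ) ≫ T.μ.app Yβ ≫ T.map iβ ≫ hβ
        = dα ≫ T.map iα ≫ T.map f ≫ T.map dβ ≫ T.map (T.map iβ) ≫ T.μ.app Xβ ≫ hβ := by
          simp only [T.map_comp, Category.assoc]
          simp only [← Category.assoc, ← hμ]
      _ = dα ≫ T.map iα ≫ T.map f ≫ T.map dβ ≫ T.map (T.map iβ) ≫ T.map hβ ≫ hβ := by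
          rw [halgβ1]
      _ = dα ≫ T.map iα ≫ T.map f ≫ T.map (dβ ≫ T.map iβ ≫ hβ) ≫ hβ := by
          simp only [T.map_comp, Category.assoc]
      _ = dα ≫ T.map iα ≫ T.map f ≫ hβ := by rw [hgenβ]; simp
      _ = dα ≫ T.map iα ≫ hα ≫ f := by rw [← hf]
      _ = (dα ≫ T.map iα ≫ hα) ≫ f := by simp only [Category.assoc]
      _ = f := by rw [hgenα]; simp
end

section
/- Let α, β, γ be bases for 𝕋-algebras (X_α, h_α), (X_β, h_β), (X_γ, h_γ) respectively, and let f : (X_α, h_α) ⟶ (X_β, h_β) and g : (X_β, h_β) ⟶ (X_γ, h_γ) be 𝕋-algebra homomorphisms. Then the basis representations compose as Kleisli morphisms: g_{βγ} · f_{αβ} = (g ∘ f)_{αγ}, i.e. μ_{Y_γ} ∘ T(d_γ ∘ g ∘ i_β) ∘ (d_β ∘ f ∘ i_α) = d_γ ∘ g ∘ f ∘ i_α. -/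
open CategoryTheory

/-- Given bases `α`, `β`, `γ` for `T`-algebras and `T`-algebra homomorphisms
`f : (X_α, h_α) ⟶ (X_β, h_β)`, `g : (X_β, h_β) ⟶ (X_γ, h_γ)`, the basis
representations compose as Kleisli morphisms: `g_{βγ} · f_{αβ} = (g ∘ f)_{αγ}`. -/
theorem stmt15 {C : Type*} [Category C] (T : Monad C)
    (Xα : C) (hα : T.obj Xα ⟶ Xα)
    (halgα1 : T.μ.app Xα ≫ hα = T.map hα ≫ hα) (halgα2 : T.η.app Xα ≫ hα = 𝟙 Xα)
    (Xβ : C) (hβ : T.obj Xβ ⟶ Xβ)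
    (halgβ1 : T.μ.app Xβ ≫ hβ = T.map hβ ≫ hβ) (halgβ2 : T.η.app Xβ ≫ hβ = 𝟙 Xβ)
    (Xγ : C) (hγ : T.obj Xγ ⟶ Xγ)
    (halgγ1 : T.μ.app Xγ ≫ hγ = T.map hγ ≫ hγ) (halgγ2 : T.η.app Xγ ≫ hγ = 𝟙 Xγ)
    (Yα : C) (iα : Yα ⟶ Xα) (dα : Xα ⟶ T.obj Yα)
    (hgenα : dα ≫ T.map iα ≫ hα = 𝟙 Xα)
    (hbasisα : T.map iα ≫ hα ≫ dα = 𝟙 (T.obj Yα))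
    (Yβ : C) (iβ : Yβ ⟶ Xβ) (dβ : Xβ ⟶ T.obj Yβ)
    (hgenβ : dβ ≫ T.map iβ ≫ hβ = 𝟙 Xβ)
    (hbasisβ : T.map iβ ≫ hβ ≫ dβ = 𝟙 (T.obj Yβ))
    (Yγ : C) (iγ : Yγ ⟶ Xγ) (dγ : Xγ ⟶ T.obj Yγ)
    (hgenγ : dγ ≫ T.map iγ ≫ hγ = 𝟙 Xγ)
    (hbasisγ : T.map iγ ≫ hγ ≫ dγ = 𝟙 (T.obj Yγ))
    (f : Xα ⟶ Xβ) (hf : hα ≫ f = T.map f ≫ hβ)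
    (g : Xβ ⟶ Xγ) (hg : hβ ≫ g = T.map g ≫ hγ) :
    (iα ≫ f ≫ dβ) ≫ T.map (iβ ≫ g ≫ dγ) ≫ T.μ.app Yγ = iα ≫ f ≫ g ≫ dγ := by
  have key : T.map dγ ≫ T.μ.app Yγ = hγ ≫ dγ := by
    have nat : T.map (T.map iγ) ≫ T.μ.app Xγ = T.μ.app Yγ ≫ T.map iγ :=
      T.μ.naturality iγ
    calc T.map dγ ≫ T.μ.app Yγ
        = T.map dγ ≫ T.μ.app Yγ ≫ (T.map iγ ≫ hγ ≫ dγ) := by rw [hbasisγ]; simp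
      _ = T.map dγ ≫ T.map (T.map iγ) ≫ T.μ.app Xγ ≫ hγ ≫ dγ := by
          rw [reassoc_of% nat.symm]
      _ = T.map dγ ≫ T.map (T.map iγ) ≫ T.map hγ ≫ hγ ≫ dγ := by
          rw [reassoc_of% halgγ1]
      _ = T.map (dγ ≫ T.map iγ ≫ hγ) ≫ hγ ≫ dγ := by simp
      _ = hγ ≫ dγ := by rw [hgenγ]; simp
  simp only [Functor.map_comp, Category.assoc]
  rw [key, reassoc_of% hg.symm, reassoc_of% hgenβ]
end

section
/- Let α, β, γ be bases for 𝕋-algebras (X_α, h_α), (X_β, h_β), (X_γ, h_γ) respectively, and let p : Y_α ⟶ T Y_β and q : Y_β ⟶ T Y_γ be morphisms. Then the associated morphisms compose: q^{βγ} ∘ p^{αβ} = (q · p)^{αγ}, where q · p := μ_{Y_γ} ∘ T q ∘ p is the Kleisli composite. -/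
open CategoryTheory

/-- Given bases `α`, `β`, `γ` for `T`-algebras and morphisms `p : Y_α ⟶ T Y_β`,
`q : Y_β ⟶ T Y_γ`, the associated morphisms compose:
`q^{βγ} ∘ p^{αβ} = (q · p)^{αγ}`, where `q · p := μ_{Y_γ} ∘ T q ∘ p`. -/
theorem stmt16 {C : Type*} [Category C] (T : Monad C)
    (Xα : C) (hα : T.obj Xα ⟶ Xα)
    (halgα1 : T.μ.app Xα ≫ hα = T.map hα ≫ hα) (halgα2 : T.η.app Xα ≫ hα = 𝟙 Xα)
    (Xβ : C) (hβ : T.obj Xβ ⟶ Xβ)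
    (halgβ1 : T.μ.app Xβ ≫ hβ = T.map hβ ≫ hβ) (halgβ2 : T.η.app Xβ ≫ hβ = 𝟙 Xβ)
    (Xγ : C) (hγ : T.obj Xγ ⟶ Xγ)
    (halgγ1 : T.μ.app Xγ ≫ hγ = T.map hγ ≫ hγ) (halgγ2 : T.η.app Xγ ≫ hγ = 𝟙 Xγ)
    (Yα : C) (iα : Yα ⟶ Xα) (dα : Xα ⟶ T.obj Yα)
    (hgenα : dα ≫ T.map iα ≫ hα = 𝟙 Xα)
    (hbasisα : T.map iα ≫ hα ≫ dα = 𝟙 (T.obj Yα))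
    (Yβ : C) (iβ : Yβ ⟶ Xβ) (dβ : Xβ ⟶ T.obj Yβ)
    (hgenβ : dβ ≫ T.map iβ ≫ hβ = 𝟙 Xβ)
    (hbasisβ : T.map iβ ≫ hβ ≫ dβ = 𝟙 (T.obj Yβ))
    (Yγ : C) (iγ : Yγ ⟶ Xγ) (dγ : Xγ ⟶ T.obj Yγ)
    (hgenγ : dγ ≫ T.map iγ ≫ hγ = 𝟙 Xγ)
    (hbasisγ : T.map iγ ≫ hγ ≫ dγ = 𝟙 (T.obj Yγ))
    (p : Yα ⟶ T.obj Yβ) (q : Yβ ⟶ T.obj Yγ) :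
    (dα ≫ T.map p ≫ T.μ.app Yβ ≫ T.map iβ ≫ hβ) ≫
        (dβ ≫ T.map q ≫ T.μ.app Yγ ≫ T.map iγ ≫ hγ) =
      dα ≫ T.map (p ≫ T.map q ≫ T.μ.app Yγ) ≫ T.μ.app Yγ ≫ T.map iγ ≫ hγ := by
  have hb := reassoc_of% hbasisβ
  slice_lhs 4 6 => rw [hbasisβ]
  simp only [Functor.map_comp, Category.assoc, Category.id_comp]
  rw [← T.μ.naturality_assoc q]
  simp only [Functor.comp_map, reassoc_of% (T.assoc Yγ)]
end

section
/- Let α = (Y_α, i_α, d_α) and β = (Y_β, i_β, d_β) be bases for 𝕋-algebras (X_α, h_α) and (X_β, h_β) respectively, and let f : (X_α, h_α) ⟶ (X_β, h_β) be a 𝕋-algebra homomorphism. Then d_β ∘ f = f_{αβ} · d_α, i.e. d_β ∘ f = μ_{Y_β} ∘ T(d_β ∘ f ∘ i_α) ∘ d_α. -/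
open CategoryTheory

/-- Given bases `α` and `β` for `T`-algebras `(X_α, h_α)` and `(X_β, h_β)` and
a `T`-algebra homomorphism `f`, one has `d_β ∘ f = f_{αβ} · d_α`, i.e.
`d_β ∘ f = μ_{Y_β} ∘ T(d_β ∘ f ∘ i_α) ∘ d_α`. -/
theorem stmt17 {C : Type*} [Category C] (T : Monad C)
    (Xα : C) (hα : T.obj Xα ⟶ Xα)
    (halgα1 : T.μ.app Xα ≫ hα = T.map hα ≫ hα) (halgα2 : T.η.app Xα ≫ hα = 𝟙 Xα)
    (Xβ : C) (hβ : T.obj Xβ ⟶ Xβ)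
    (halgβ1 : T.μ.app Xβ ≫ hβ = T.map hβ ≫ hβ) (halgβ2 : T.η.app Xβ ≫ hβ = 𝟙 Xβ)
    (Yα : C) (iα : Yα ⟶ Xα) (dα : Xα ⟶ T.obj Yα)
    (hgenα : dα ≫ T.map iα ≫ hα = 𝟙 Xα)
    (hbasisα : T.map iα ≫ hα ≫ dα = 𝟙 (T.obj Yα))
    (Yβ : C) (iβ : Yβ ⟶ Xβ) (dβ : Xβ ⟶ T.obj Yβ)
    (hgenβ : dβ ≫ T.map iβ ≫ hβ = 𝟙 Xβ)
    (hbasisβ : T.map iβ ≫ hβ ≫ dβ = 𝟙 (T.obj Yβ))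
    (f : Xα ⟶ Xβ) (hf : hα ≫ f = T.map f ≫ hβ) :
    f ≫ dβ = dα ≫ T.map (iα ≫ f ≫ dβ) ≫ T.μ.app Yβ := by
  have key : T.map dβ ≫ T.μ.app Yβ = hβ ≫ dβ := by
    calc T.map dβ ≫ T.μ.app Yβ
        = T.map dβ ≫ T.μ.app Yβ ≫ (T.map iβ ≫ hβ ≫ dβ) := by rw [hbasisβ]; simp
      _ = T.map dβ ≫ T.map (T.map iβ) ≫ T.μ.app Xβ ≫ hβ ≫ dβ := by
          rw [← Category.assoc (T.μ.app Yβ), ← T.μ.naturality]; simp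
      _ = T.map dβ ≫ T.map (T.map iβ) ≫ T.map hβ ≫ hβ ≫ dβ := by
          rw [← Category.assoc (T.μ.app Xβ), halgβ1]; simp
      _ = T.map (dβ ≫ T.map iβ ≫ hβ) ≫ hβ ≫ dβ := by simp
      _ = hβ ≫ dβ := by rw [hgenβ]; simp
  calc f ≫ dβ
      = (dα ≫ T.map iα ≫ hα) ≫ f ≫ dβ := by rw [hgenα]; simp
    _ = dα ≫ T.map iα ≫ T.map f ≫ hβ ≫ dβ := by
        simp only [Category.assoc]; rw [reassoc_of% hf]
    _ = dα ≫ T.map iα ≫ T.map f ≫ T.map dβ ≫ T.μ.app Yβ := by rw [← key]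
    _ = dα ≫ T.map (iα ≫ f ≫ dβ) ≫ T.μ.app Yβ := by simp
end

section
/- Let α = (Y_α, i_α, d_α) and α' = (Y_{α'}, i_{α'}, d_{α'}) be bases for a 𝕋-algebra (X_α, h_α), let β = (Y_β, i_β, d_β) and β' = (Y_{β'}, i_{β'}, d_{β'}) be bases for a 𝕋-algebra (X_β, h_β), and let f : (X_α, h_α) ⟶ (X_β, h_β) be a 𝕋-algebra homomorphism. Then p := d_α ∘ i_{α'} : Y_{α'} ⟶ T Y_α is a Kleisli isomorphism with Kleisli inverse d_{α'} ∘ i_α, q := d_{β'} ∘ i_β : Y_β ⟶ T Y_{β'} is a Kleisli isomorphism with Kleisli inverse d_β ∘ i_{β'}, and the basis representations satisfy f_{α'β'} = q · f_{αβ} · p. -/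
open CategoryTheory

/-- For a basis `(Y, i, d)` of a `T`-algebra `(X, h)`, `T d ≫ μ = h ≫ d`. -/
lemma stmt18_aux1 {C : Type*} [Category C] (T : Monad C)
    (X : C) (h : T.obj X ⟶ X)
    (halg1 : T.μ.app X ≫ h = T.map h ≫ h)
    (Y : C) (i : Y ⟶ X) (d : X ⟶ T.obj Y)
    (hgen : d ≫ T.map i ≫ h = 𝟙 X)
    (hbasis : T.map i ≫ h ≫ d = 𝟙 (T.obj Y)) :
    T.map d ≫ T.μ.app Y = h ≫ d := by
  have h1 : T.map d ≫ T.μ.app Y = T.map d ≫ T.μ.app Y ≫ T.map i ≫ h ≫ d := by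
    slice_rhs 3 5 => rw [hbasis]
    simp
  have nat : T.μ.app Y ≫ T.map i = T.map (T.map i) ≫ T.μ.app X := (T.μ.naturality i).symm
  rw [h1, ← Category.assoc (T.μ.app Y), nat]
  simp only [Category.assoc]
  rw [← Category.assoc (T.μ.app X), halg1, Category.assoc]
  rw [← T.map_comp_assoc, ← T.map_comp_assoc, Category.assoc, hgen, T.map_id,
    Category.id_comp]

/-- For a basis `(Y, i, d)` of a `T`-algebra `(X, h)`, `i ≫ d = η`. -/
lemma stmt18_aux2 {C : Type*} [Category C] (T : Monad C)
    (X : C) (h : T.obj X ⟶ X)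
    (halg2 : T.η.app X ≫ h = 𝟙 X)
    (Y : C) (i : Y ⟶ X) (d : X ⟶ T.obj Y)
    (hbasis : T.map i ≫ h ≫ d = 𝟙 (T.obj Y)) :
    i ≫ d = T.η.app Y := by
  have : T.η.app Y = T.η.app Y ≫ T.map i ≫ h ≫ d := by rw [hbasis]; simp
  rw [this, ← Category.assoc, ← T.η.naturality i, Category.assoc, ← Category.assoc (T.η.app X),
    halg2]
  simp

/-- Given bases `α, α'` for `(X_α, h_α)` and `β, β'` for `(X_β, h_β)` and a
`T`-algebra homomorphism `f`, the Kleisli morphisms `p := d_α ∘ i_{α'}` and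
`q := d_{β'} ∘ i_β` are Kleisli isomorphisms (with Kleisli inverses
`d_{α'} ∘ i_α` and `d_β ∘ i_{β'}` respectively), and
`f_{α'β'} = q · f_{αβ} · p`. -/
theorem stmt18 {C : Type*} [Category C] (T : Monad C)
    (Xα : C) (hα : T.obj Xα ⟶ Xα)
    (halgα1 : T.μ.app Xα ≫ hα = T.map hα ≫ hα) (halgα2 : T.η.app Xα ≫ hα = 𝟙 Xα)
    (Xβ : C) (hβ : T.obj Xβ ⟶ Xβ)
    (halgβ1 : T.μ.app Xβ ≫ hβ = T.map hβ ≫ hβ) (halgβ2 : T.η.app Xβ ≫ hβ = 𝟙 Xβ)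
    (Yα : C) (iα : Yα ⟶ Xα) (dα : Xα ⟶ T.obj Yα)
    (hgenα : dα ≫ T.map iα ≫ hα = 𝟙 Xα)
    (hbasisα : T.map iα ≫ hα ≫ dα = 𝟙 (T.obj Yα))
    (Yα' : C) (iα' : Yα' ⟶ Xα) (dα' : Xα ⟶ T.obj Yα')
    (hgenα' : dα' ≫ T.map iα' ≫ hα = 𝟙 Xα)
    (hbasisα' : T.map iα' ≫ hα ≫ dα' = 𝟙 (T.obj Yα'))
    (Yβ : C) (iβ : Yβ ⟶ Xβ) (dβ : Xβ ⟶ T.obj Yβ)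
    (hgenβ : dβ ≫ T.map iβ ≫ hβ = 𝟙 Xβ)
    (hbasisβ : T.map iβ ≫ hβ ≫ dβ = 𝟙 (T.obj Yβ))
    (Yβ' : C) (iβ' : Yβ' ⟶ Xβ) (dβ' : Xβ ⟶ T.obj Yβ')
    (hgenβ' : dβ' ≫ T.map iβ' ≫ hβ = 𝟙 Xβ)
    (hbasisβ' : T.map iβ' ≫ hβ ≫ dβ' = 𝟙 (T.obj Yβ'))
    (f : Xα ⟶ Xβ) (hf : hα ≫ f = T.map f ≫ hβ) :
    -- p' · p = η_{Y_{α'}} (p := d_α ∘ i_{α'}, p' := d_{α'} ∘ i_α)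
    (iα' ≫ dα) ≫ T.map (iα ≫ dα') ≫ T.μ.app Yα' = T.η.app Yα' ∧
    -- p · p' = η_{Y_α}
    (iα ≫ dα') ≫ T.map (iα' ≫ dα) ≫ T.μ.app Yα = T.η.app Yα ∧
    -- q' · q = η_{Y_β} (q := d_{β'} ∘ i_β, q' := d_β ∘ i_{β'})
    (iβ ≫ dβ') ≫ T.map (iβ' ≫ dβ) ≫ T.μ.app Yβ = T.η.app Yβ ∧
    -- q · q' = η_{Y_{β'}}
    (iβ' ≫ dβ) ≫ T.map (iβ ≫ dβ') ≫ T.μ.app Yβ' = T.η.app Yβ' ∧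
    -- f_{α'β'} = q · f_{αβ} · p
    iα' ≫ f ≫ dβ' =
      ((iα' ≫ dα) ≫ T.map (iα ≫ f ≫ dβ) ≫ T.μ.app Yβ) ≫
        T.map (iβ ≫ dβ') ≫ T.μ.app Yβ' := by
  have Lα := stmt18_aux1 T Xα hα halgα1 Yα iα dα hgenα hbasisα
  have Lα' := stmt18_aux1 T Xα hα halgα1 Yα' iα' dα' hgenα' hbasisα'
  have Lβ := stmt18_aux1 T Xβ hβ halgβ1 Yβ iβ dβ hgenβ hbasisβ
  have Lβ' := stmt18_aux1 T Xβ hβ halgβ1 Yβ' iβ' dβ' hgenβ' hbasisβ'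
  have Mα := stmt18_aux2 T Xα hα halgα2 Yα iα dα hbasisα
  have Mα' := stmt18_aux2 T Xα hα halgα2 Yα' iα' dα' hbasisα'
  have Mβ := stmt18_aux2 T Xβ hβ halgβ2 Yβ iβ dβ hbasisβ
  have Mβ' := stmt18_aux2 T Xβ hβ halgβ2 Yβ' iβ' dβ' hbasisβ'
  refine ⟨?_, ?_, ?_, ?_, ?_⟩
  · rw [T.map_comp, Category.assoc, Category.assoc, Lα']
    slice_lhs 2 4 => rw [hgenα]
    simpa using Mα'
  · rw [T.map_comp, Category.assoc, Category.assoc, Lα]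
    slice_lhs 2 4 => rw [hgenα']
    simpa using Mα
  · rw [T.map_comp, Category.assoc, Category.assoc, Lβ]
    slice_lhs 2 4 => rw [hgenβ']
    simpa using Mβ
  · rw [T.map_comp, Category.assoc, Category.assoc, Lβ']
    slice_lhs 2 4 => rw [hgenβ]
    simpa using Mβ'
  · -- inner: (iα' ≫ dα) ≫ T (iα ≫ f ≫ dβ) ≫ μ = iα' ≫ f ≫ dβ
    have inner : (iα' ≫ dα) ≫ T.map (iα ≫ f ≫ dβ) ≫ T.μ.app Yβ = iα' ≫ (f ≫ dβ) := by
      rw [T.map_comp, T.map_comp]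
      simp only [Category.assoc]
      rw [Lβ, ← Category.assoc (T.map f), ← hf]
      slice_lhs 2 4 => rw [hgenα]
      simp
    rw [inner]
    rw [T.map_comp]
    simp only [Category.assoc]
    rw [Lβ']
    slice_rhs 3 5 => rw [hgenβ]
    simp
end

section
/- Let (X, h, k) be a λ-bialgebra and let (Y, k_Y, i, d) be a basis for it, meaning: (Y, k_Y) is an F-coalgebra, i : Y ⟶ X satisfies k ∘ i = F i ∘ k_Y, d : X ⟶ T Y satisfies (λ_Y ∘ T k_Y) ∘ d = F d ∘ k, and h ∘ T i ∘ d = id_X as well as d ∘ h ∘ T i = id_{T Y}. Then the two induced coalgebra structures on T Y coincide: λ_Y ∘ T k_Y = (F d ∘ k ∘ i)^♯, where (F d ∘ k ∘ i)^♯ := F(μ_Y) ∘ λ_{T Y} ∘ T(F d ∘ k ∘ i). -/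
open CategoryTheory

/-- If `(Y, k_Y, i, d)` is a basis for a `λ`-bialgebra `(X, h, k)`, then the two
induced coalgebra structures on `T Y` coincide:
`λ_Y ∘ T k_Y = (F d ∘ k ∘ i)^♯`. -/
theorem stmt19 {C : Type*} [Category C] (T : Monad C) (F : C ⥤ C)
    (lam : F ⋙ (T : C ⥤ C) ⟶ (T : C ⥤ C) ⋙ F)
    (hlη : ∀ Z : C, T.η.app (F.obj Z) ≫ lam.app Z = F.map (T.η.app Z))
    (hlμ : ∀ Z : C, T.μ.app (F.obj Z) ≫ lam.app Z =
      T.map (lam.app Z) ≫ lam.app (T.obj Z) ≫ F.map (T.μ.app Z))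
    (X : C) (h : T.obj X ⟶ X)
    (halg1 : T.μ.app X ≫ h = T.map h ≫ h) (halg2 : T.η.app X ≫ h = 𝟙 X)
    (k : X ⟶ F.obj X)
    (hbi : h ≫ k = T.map k ≫ lam.app X ≫ F.map h)
    (Y : C) (kY : Y ⟶ F.obj Y) (i : Y ⟶ X) (d : X ⟶ T.obj Y)
    -- i is an F-coalgebra homomorphism: k ∘ i = F i ∘ k_Y
    (hi : i ≫ k = kY ≫ F.map i)
    -- d is an F-coalgebra homomorphism: (λ_Y ∘ T k_Y) ∘ d = F d ∘ k
    (hd : d ≫ T.map kY ≫ lam.app Y = k ≫ F.map d)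
    (hgen : d ≫ T.map i ≫ h = 𝟙 X)
    (hbasis : T.map i ≫ h ≫ d = 𝟙 (T.obj Y)) :
    T.map kY ≫ lam.app Y =
      T.map (i ≫ k ≫ F.map d) ≫ lam.app (T.obj Y) ≫ F.map (T.μ.app Y) := by
  have hn : T.μ.app Y ≫ T.map i = T.map (T.map i) ≫ T.μ.app X := by
    have := T.μ.naturality i
    simp only [Functor.comp_map] at this
    exact this.symm
  have halg1' := reassoc_of% halg1
  have h1 : T.map d ≫ T.μ.app Y = h ≫ d := by
    calc T.map d ≫ T.μ.app Y
        = T.map d ≫ T.μ.app Y ≫ T.map i ≫ h ≫ d := by rw [hbasis, Category.comp_id]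
      _ = T.map d ≫ (T.μ.app Y ≫ T.map i) ≫ h ≫ d := by simp
      _ = T.map d ≫ (T.map (T.map i) ≫ T.μ.app X) ≫ h ≫ d := by rw [hn]
      _ = T.map d ≫ T.map (T.map i) ≫ T.map h ≫ h ≫ d := by
          simp only [Category.assoc]; rw [halg1']
      _ = T.map (d ≫ T.map i ≫ h) ≫ h ≫ d := by simp [Functor.map_comp]
      _ = h ≫ d := by rw [hgen]; simp
  have key : T.map (i ≫ d) ≫ T.μ.app Y = 𝟙 (T.obj Y) := by
    rw [Functor.map_comp, Category.assoc, h1]; exact hbasis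
  have heq : kY ≫ F.map (i ≫ d) = i ≫ k ≫ F.map d := by
    rw [F.map_comp, ← Category.assoc, ← hi, Category.assoc]
  have hnat := lam.naturality (i ≫ d)
  simp only [Functor.comp_map] at hnat
  calc T.map kY ≫ lam.app Y
      = T.map kY ≫ lam.app Y ≫ F.map (T.map (i ≫ d) ≫ T.μ.app Y) := by
        rw [key]; simp
    _ = T.map kY ≫ (lam.app Y ≫ F.map (T.map (i ≫ d))) ≫ F.map (T.μ.app Y) := by
        simp
    _ = T.map kY ≫ (T.map (F.map (i ≫ d)) ≫ lam.app (T.obj Y)) ≫ F.map (T.μ.app Y) := by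
        rw [hnat]
    _ = T.map (kY ≫ F.map (i ≫ d)) ≫ lam.app (T.obj Y) ≫ F.map (T.μ.app Y) := by
        simp
    _ = T.map (i ≫ k ≫ F.map d) ≫ lam.app (T.obj Y) ≫ F.map (T.μ.app Y) := by
        rw [heq]
end
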